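/- arXiv:1409.7194 — 5 statements merged into one kernel-verified Lean document; each statement's English description precedes it below -/
import Mathlib

section
/- Let G be a finite abelian group, A ⊆ G a symmetric set containing 0, and h : G → ℝ a function such that h(x) ≤ 0 for all x ∉ A, and all Fourier coefficients ĥ(γ) = (1/|G|)∑_{x∈G} h(x)γ(x) are nonnegative, with ĥ(1) > 0 (where 1 is the trivial character). Then for any set B ⊆ G with the property that b - b' ∈ (G\A) ∪ {0} for all b, b' ∈ B, one has |B| ≤ h(0)/ĥ(1). -/
/-!
Delsarte's linear programming argument. Put `z(γ) = ∑_{b ∈ B} γ(b)`. Fourier inversion gives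
`∑_γ ĥ(γ) |z(γ)|² = ∑_{b, b' ∈ B} h(b' - b)`. Since every `ĥ(γ) ≥ 0`, the left side is at least
the trivial character's term `ĥ(1) |B|²`; since the off-diagonal differences lie outside `A`,
where `h ≤ 0`, the right side is at most `|B| h(0)`.
-/

open Finset

theorem Finset.sum_sum_le_sum_diag {ι M : Type*} [DecidableEq ι] [AddCommMonoid M]
    [PartialOrder M] [IsOrderedAddMonoid M] (s : Finset ι) (f : ι → ι → M)
    (hf : ∀ i ∈ s, ∀ j ∈ s, i ≠ j → f i j ≤ 0) :
    ∑ i ∈ s, ∑ j ∈ s, f i j ≤ ∑ i ∈ s, f i i := by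
  refine sum_le_sum fun i hi => ?_
  rw [← add_sum_erase s _ hi]
  exact add_le_of_nonpos_right <| sum_nonpos fun j hj =>
    hf i hi j (mem_of_mem_erase hj) (ne_of_mem_erase hj).symm

namespace AddChar

variable {G : Type*} [AddCommGroup G] [Fintype G]

noncomputable def fourierCoeff (f : G → ℂ) (γ : AddChar G ℂ) : ℂ :=
  (∑ x, f x * γ x) / Fintype.card G

lemma sum_fourierCoeff_mul_apply [DecidableEq G] (f : G → ℂ) (c : G) :
    ∑ γ : AddChar G ℂ, fourierCoeff f γ * γ c = f (-c) := by
  have hcard : (Fintype.card G : ℂ) ≠ 0 := Nat.cast_ne_zero.2 Fintype.card_ne_zero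
  simp_rw [fourierCoeff, div_mul_eq_mul_div, ← sum_div, sum_mul, mul_assoc,
    ← map_add_eq_mul]
  rw [sum_comm]
  simp_rw [← mul_sum, sum_apply_eq_ite, add_eq_zero_iff_eq_neg, mul_ite, mul_zero,
    sum_ite_eq', mem_univ, if_true, mul_div_cancel_right₀ _ hcard]

lemma normSq_sum_apply (B : Finset G) (γ : AddChar G ℂ) :
    (Complex.normSq (∑ b ∈ B, γ b) : ℂ) = ∑ b ∈ B, ∑ b' ∈ B, γ (b - b') := by
  simp_rw [← Complex.mul_conj, map_sum, sum_mul_sum, sub_eq_add_neg, map_add_eq_mul,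
    map_neg_eq_conj]

lemma sum_fourierCoeff_mul_normSq [DecidableEq G] (f : G → ℂ) (B : Finset G) :
    ∑ γ : AddChar G ℂ, fourierCoeff f γ * Complex.normSq (∑ b ∈ B, γ b)
      = ∑ b ∈ B, ∑ b' ∈ B, f (b' - b) := by
  simp_rw [normSq_sum_apply, mul_sum]
  rw [sum_comm]
  refine sum_congr rfl fun b _ => ?_
  rw [sum_comm]
  simp_rw [sum_fourierCoeff_mul_apply, neg_sub]

end AddChar

open AddChar

theorem card_sq_mul_fourierCoeff_one_le {G : Type*} [AddCommGroup G] [Fintype G]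
    [DecidableEq G]
    (h : G → ℝ) (hft : ∀ γ : AddChar G ℂ, 0 ≤ (fourierCoeff (fun x => (h x : ℂ)) γ).re)
    (B : Finset G) (hB : ∀ b ∈ B, ∀ b' ∈ B, b ≠ b' → h (b' - b) ≤ 0) :
    (fourierCoeff (fun x => (h x : ℂ)) 1).re * (#B : ℝ) ^ 2 ≤ #B * h 0 := by
  set ĥ := fourierCoeff (fun x => (h x : ℂ))
  have hspec : ∑ γ : AddChar G ℂ, (ĥ γ).re * Complex.normSq (∑ b ∈ B, γ b)
      = ∑ b ∈ B, ∑ b' ∈ B, h (b' - b) := by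
    simpa [Complex.re_sum] using
      congrArg Complex.re (sum_fourierCoeff_mul_normSq (fun x => (h x : ℂ)) B)
  calc (ĥ 1).re * (#B : ℝ) ^ 2 = (ĥ 1).re * Complex.normSq (∑ b ∈ B, (1 : AddChar G ℂ) b) := by
        simp [Complex.normSq_natCast, sq]
    _ ≤ ∑ γ : AddChar G ℂ, (ĥ γ).re * Complex.normSq (∑ b ∈ B, γ b) :=
        single_le_sum (f := fun γ : AddChar G ℂ => (ĥ γ).re * Complex.normSq (∑ b ∈ B, γ b))
          (fun γ _ => mul_nonneg (hft γ) (Complex.normSq_nonneg _)) (mem_univ 1)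
    _ = ∑ b ∈ B, ∑ b' ∈ B, h (b' - b) := hspec
    _ ≤ ∑ b ∈ B, h (b - b) := sum_sum_le_sum_diag B _ hB
    _ = #B * h 0 := by simp

theorem delsarte_bound_general {G : Type*} [AddCommGroup G] [Fintype G] [DecidableEq G]
    (A : Finset G)
    (h : G → ℝ)
    (hneg : ∀ x : G, x ∉ A → h x ≤ 0)
    (hft : ∀ γ : AddChar G ℂ,
      0 ≤ ((∑ x : G, (h x : ℂ) * γ x) / (Fintype.card G : ℂ)).re ∧
      ((∑ x : G, (h x : ℂ) * γ x) / (Fintype.card G : ℂ)).im = 0)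
    (hpos : 0 < ((∑ x : G, (h x : ℂ) * (1 : AddChar G ℂ) x) / (Fintype.card G : ℂ)).re)
    (B : Finset G)
    (hB : ∀ b ∈ B, ∀ b' ∈ B, b - b' ∉ A ∨ b - b' = 0) :
    (B.card : ℝ) ≤
      h 0 / ((∑ x : G, (h x : ℂ) * (1 : AddChar G ℂ) x) / (Fintype.card G : ℂ)).re := by
  change (#B : ℝ) ≤ h 0 / (fourierCoeff (fun x => (h x : ℂ)) 1).re
  change 0 < (fourierCoeff (fun x => (h x : ℂ)) 1).re at hpos
  have hft_re γ := (hft γ).1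
  have hB_off : ∀ b ∈ B, ∀ b' ∈ B, b ≠ b' → h (b' - b) ≤ 0 := fun b hb b' hb' hne =>
    hneg _ ((hB b' hb' b hb).resolve_right (sub_ne_zero.2 hne.symm))
  have hcoeff_le : (fourierCoeff (fun x => (h x : ℂ)) 1).re ≤ h 0 := by
    simpa using card_sq_mul_fourierCoeff_one_le h hft_re {0} (by simp)
  have hcard := card_sq_mul_fourierCoeff_one_le h hft_re B hB_off
  rcases B.eq_empty_or_nonempty with rfl | hB_ne
  · simpa using div_nonneg (hpos.le.trans hcoeff_le) hpos.le
  · rw [le_div_iff₀ hpos]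
    nlinarith [hB_ne.card_pos]

/-- Delsarte's LP bound on a finite abelian group. -/
theorem delsarte_bound {G : Type*} [AddCommGroup G] [Fintype G] [DecidableEq G]
    (A : Finset G) (hA0 : (0 : G) ∈ A) (hAsymm : ∀ x ∈ A, -x ∈ A)
    (h : G → ℝ)
    (hneg : ∀ x : G, x ∉ A → h x ≤ 0)
    (hft : ∀ γ : AddChar G ℂ,
      0 ≤ ((∑ x : G, (h x : ℂ) * γ x) / (Fintype.card G : ℂ)).re ∧
      ((∑ x : G, (h x : ℂ) * γ x) / (Fintype.card G : ℂ)).im = 0)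
    (hpos : 0 < ((∑ x : G, (h x : ℂ) * (1 : AddChar G ℂ) x) / (Fintype.card G : ℂ)).re)
    (B : Finset G)
    (hB : ∀ b ∈ B, ∀ b' ∈ B, b - b' ∉ A ∨ b - b' = 0) :
    (B.card : ℝ) ≤
      h 0 / ((∑ x : G, (h x : ℂ) * (1 : AddChar G ℂ) x) / (Fintype.card G : ℂ)).re :=
  delsarte_bound_general A h hneg hft hpos B hB
end

section
/- With c = 3/2 − (3/2)√(16√6 − 39), one has c > 0.843, and for any real numbers s₀, s₁, s₂ with c ≤ s_j ≤ 6 − c for all j and s₀ + s₁ + s₂ = 9, one has s₀² + s₁² + s₂² ≤ c² + (6−c)² + 9 < 37. -/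
/-- With `c = 3/2 - (3/2)√(16√6 - 39)` one has `c > 0.843`, and any
`s₀,s₁,s₂ ∈ [c, 6-c]` with `s₀+s₁+s₂ = 9` satisfy
`s₀²+s₁²+s₂² ≤ c² + (6-c)² + 9 < 37`. -/
theorem sum_sq_bound_of_mem_interval
    (c : ℝ) (hc : c = 3 / 2 - 3 / 2 * Real.sqrt (16 * Real.sqrt 6 - 39)) :
    (0.843 : ℝ) < c ∧
    ∀ s₀ s₁ s₂ : ℝ,
      (c ≤ s₀ ∧ s₀ ≤ 6 - c) → (c ≤ s₁ ∧ s₁ ≤ 6 - c) → (c ≤ s₂ ∧ s₂ ≤ 6 - c) →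
      s₀ + s₁ + s₂ = 9 →
      s₀ ^ 2 + s₁ ^ 2 + s₂ ^ 2 ≤ c ^ 2 + (6 - c) ^ 2 + 9 ∧
        c ^ 2 + (6 - c) ^ 2 + 9 < 37 := by
  have h6 : Real.sqrt 6 < 2.4494898 := by
    rw [show (2.4494898 : ℝ) = Real.sqrt (2.4494898 ^ 2) by
      rw [Real.sqrt_sq (by norm_num)]]
    exact Real.sqrt_lt_sqrt (by norm_num) (by norm_num)
  have h6l : (2.449 : ℝ) < Real.sqrt 6 := by
    rw [show (2.449 : ℝ) = Real.sqrt (2.449 ^ 2) by rw [Real.sqrt_sq (by norm_num)]]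
    exact Real.sqrt_lt_sqrt (by norm_num) (by norm_num)
  have hinn0 : (0 : ℝ) ≤ 16 * Real.sqrt 6 - 39 := by nlinarith
  have hinner : (16 : ℝ) * Real.sqrt 6 - 39 < 0.438 ^ 2 := by nlinarith
  have hs : Real.sqrt (16 * Real.sqrt 6 - 39) < 0.438 := by
    calc Real.sqrt (16 * Real.sqrt 6 - 39) < Real.sqrt (0.438 ^ 2) :=
          Real.sqrt_lt_sqrt hinn0 hinner
      _ = 0.438 := Real.sqrt_sq (by norm_num)
  have hsnn : 0 ≤ Real.sqrt (16 * Real.sqrt 6 - 39) := Real.sqrt_nonneg _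
  have hclo : (0.843 : ℝ) < c := by rw [hc]; nlinarith
  have hchi : c ≤ 3 / 2 := by rw [hc]; nlinarith
  refine ⟨hclo, fun s₀ s₁ s₂ h0 h1 h2 hsum => ?_⟩
  obtain ⟨h0l, h0u⟩ := h0
  obtain ⟨h1l, h1u⟩ := h1
  obtain ⟨h2l, h2u⟩ := h2
  constructor
  · have k1 : 0 ≤ (s₀ - c) * (s₁ - c) * (s₂ - c) :=
      mul_nonneg (mul_nonneg (by linarith) (by linarith)) (by linarith)
    have k2 : 0 ≤ (6 - c - s₀) * (6 - c - s₁) * (6 - c - s₂) :=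
      mul_nonneg (mul_nonneg (by linarith) (by linarith)) (by linarith)
    have h3 : (0:ℝ) < 6 - 2 * c := by linarith
    have hz : (6 - 2*c) * (s₀+s₁+s₂-3) * (s₀+s₁+s₂-9) = 0 := by
      rw [hsum]; ring
    nlinarith [k1, k2, h3, hz]
  · nlinarith
end

section
/- Let a, b ∈ 𝕋 and z = (z↑, z↓) ∈ 𝕋⁶ be unbiased to all six columns of F^T(a,b) (i.e. |⟨z, b_k⟩|² = 6 for k = 1,…,6). Set s_j = |⟨z↑, f_j⟩|² for j = 0,1,2, where f₀=(1,1,1), f₁=(1,ω,ω̄), f₂=(1,ω̄,ω). Then |⟨z↓, f_j⟩|² = 6 − s_j for each j, and K(z) = (s₀² + s₁² + s₂² − 54)/486, where K(z) = (1/486)·∑_{j=0}^{2}(⟨z↑, f_j⟩·⟨c_j f_j, z↓⟩)² with (c₀,c₁,c₂)=(1,a,b). In particular K(z) is real. -/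
open Finset

noncomputable def omega3 : ℂ := Complex.exp (2 * Real.pi * Complex.I / 3)

noncomputable def fvec : Fin 3 → Fin 3 → ℂ :=
  ![![1, 1, 1], ![1, omega3, (starRingEnd ℂ) omega3], ![1, (starRingEnd ℂ) omega3, omega3]]

/-- The parameters `(c₀,c₁,c₂) = (1,a,b)`. -/
noncomputable def cpar (a b : ℂ) : Fin 3 → ℂ := ![1, a, b]

/-- The columns of `F^T(a,b)`: `(f_j, ±c_j f_j)` for `j = 0,1,2`. -/
noncomputable def FTcol (a b : ℂ) (j : Fin 3) (ε : Bool) : Fin 6 → ℂ :=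
  Fin.append (fvec j) (fun i => (if ε then 1 else -1) * cpar a b j * fvec j i)

/-- The second witness function
`K(z) = (1/486)·∑_j (⟨z↑,f_j⟩·⟨c_j f_j, z↓⟩)²`. -/
noncomputable def Kfun (a b : ℂ) (zu zd : Fin 3 → ℂ) : ℂ :=
  (1 / 486) * ∑ j : Fin 3,
    ((∑ i : Fin 3, zu i * (starRingEnd ℂ) (fvec j i)) *
      (∑ i : Fin 3, cpar a b j * fvec j i * (starRingEnd ℂ) (zd i))) ^ 2

/-! Unbiasedness to the pair `(f_j, ±c_j f_j)` says `|u ± w|² = 6` for `u = ⟨z↑,f_j⟩` and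
`w = conj c_j ⟨z↓,f_j⟩`. By the parallelogram law `|u|² + |w|² = 6` and `Re (u w̄) = 0`, so
`(u w̄)² = -|u|²|w|² = s_j² - 6 s_j`. Summing over `j` and using Parseval for the Fourier basis
`f_j`, `s₀ + s₁ + s₂ = 3‖z↑‖² = 9`, gives the formula for `K`. -/

open Complex

lemma isPrimitiveRoot_omega3 : IsPrimitiveRoot omega3 3 := by
  convert Complex.isPrimitiveRoot_exp 3 (by norm_num) using 2
  rw [omega3]; norm_num

lemma omega3_sq_add_omega3_add_one : omega3 ^ 2 + omega3 + 1 = 0 := by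
  have h := isPrimitiveRoot_omega3.geom_sum_eq_zero (by norm_num)
  simp only [Finset.sum_range_succ, Finset.sum_range_zero] at h
  linear_combination h

lemma conj_omega3 : starRingEnd ℂ omega3 = -1 - omega3 := by
  rw [← inv_eq_conj (isPrimitiveRoot_omega3.norm'_eq_one (by norm_num))]
  exact inv_eq_of_mul_eq_one_right (by linear_combination -omega3_sq_add_omega3_add_one)

noncomputable def innerFvec (z : Fin 3 → ℂ) (j : Fin 3) : ℂ :=
  ∑ i : Fin 3, z i * starRingEnd ℂ (fvec j i)

lemma sum_normSq_innerFvec (z : Fin 3 → ℂ) :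
    ∑ j : Fin 3, normSq (innerFvec z j) = 3 * ∑ i : Fin 3, normSq (z i) := by
  apply ofReal_injective
  push_cast
  simp only [← mul_conj, innerFvec, Fin.sum_univ_three, fvec, Matrix.cons_val_zero,
    Matrix.cons_val_one, Matrix.cons_val_two, Matrix.head_cons, Matrix.tail_cons, map_add,
    map_mul, map_one, conj_conj, mul_one]
  rw [conj_omega3]
  linear_combination (2 * (z 1 * starRingEnd ℂ (z 2) + z 2 * starRingEnd ℂ (z 1)) -
    2 * (z 1 * starRingEnd ℂ (z 1) + z 2 * starRingEnd ℂ (z 2))) * omega3_sq_add_omega3_add_one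

lemma sum_append_mul_conj {m n : ℕ} (zu f : Fin m → ℂ) (zd g : Fin n → ℂ) :
    ∑ i : Fin (m + n), Fin.append zu zd i * starRingEnd ℂ (Fin.append f g i) =
      ∑ i : Fin m, zu i * starRingEnd ℂ (f i) + ∑ i : Fin n, zd i * starRingEnd ℂ (g i) := by
  simp [Fin.sum_univ_add]

lemma inner_FTcol (a b : ℂ) (zu zd : Fin 3 → ℂ) (j : Fin 3) (ε : Bool) :
    ∑ i : Fin 6, Fin.append zu zd i * starRingEnd ℂ (FTcol a b j ε i) =
      innerFvec zu j + (if ε then 1 else -1) * starRingEnd ℂ (cpar a b j) * innerFvec zd j := by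
  rw [FTcol, innerFvec, innerFvec, Finset.mul_sum]
  refine (sum_append_mul_conj (m := 3) (n := 3) _ _ _ _).trans (congrArg _ ?_)
  refine Finset.sum_congr rfl fun i _ => ?_
  cases ε <;>
    simp only [Bool.false_eq_true, ↓reduceIte, neg_mul, one_mul, map_neg, map_mul] <;> ring

lemma norm_cpar {a b : ℂ} (ha : ‖a‖ = 1) (hb : ‖b‖ = 1) (j : Fin 3) : ‖cpar a b j‖ = 1 := by
  fin_cases j <;> simp [cpar, ha, hb]

lemma sq_eq_neg_normSq_of_re_eq_zero {x : ℂ} (h : x.re = 0) : x ^ 2 = -(normSq x : ℂ) := by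
  apply Complex.ext <;> simp [sq, normSq_apply, h]

lemma normSq_and_sq_mul_conj_of_normSq_add_sub_eq {u w : ℂ} {r : ℝ}
    (hp : normSq (u + w) = r) (hm : normSq (u - w) = r) :
    normSq w = r - normSq u ∧
      (u * starRingEnd ℂ w) ^ 2 = ((normSq u ^ 2 - r * normSq u : ℝ) : ℂ) := by
  rw [normSq_add] at hp
  rw [normSq_sub] at hm
  have hw : normSq w = r - normSq u := by linarith
  refine ⟨hw, ?_⟩
  rw [sq_eq_neg_normSq_of_re_eq_zero (by linarith), normSq_mul, normSq_conj, hw]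
  push_cast; ring

lemma normSq_and_sq_mul_conj_of_unbiased_pair {c u v : ℂ} {r : ℝ} (hc : ‖c‖ = 1)
    (hp : normSq (u + starRingEnd ℂ c * v) = r) (hm : normSq (u - starRingEnd ℂ c * v) = r) :
    normSq v = r - normSq u ∧ (u * (c * starRingEnd ℂ v)) ^ 2 =
      ((normSq u ^ 2 - r * normSq u : ℝ) : ℂ) := by
  have hcv : normSq (starRingEnd ℂ c * v) = normSq v := by
    rw [normSq_mul, normSq_conj, normSq_eq_norm_sq, hc, one_pow, one_mul]
  simpa [hcv, map_mul] using normSq_and_sq_mul_conj_of_normSq_add_sub_eq hp hm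

lemma Kfun_eq_sum (a b : ℂ) (zu zd : Fin 3 → ℂ) :
    Kfun a b zu zd =
      1 / 486 * ∑ j : Fin 3,
        (innerFvec zu j * (cpar a b j * starRingEnd ℂ (innerFvec zd j))) ^ 2 := by
  unfold Kfun innerFvec
  congr 1
  refine Finset.sum_congr rfl fun j _ => ?_
  simp only [map_sum, map_mul, conj_conj, Finset.mul_sum]
  congr 2
  funext i
  ring

theorem Kfun_eq_of_unbiased_general (a b : ℂ) (ha : ‖a‖ = 1) (hb : ‖b‖ = 1)
    (zu zd : Fin 3 → ℂ)
    (hzu : ∀ i : Fin 3, ‖zu i‖ = 1)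
    (hunb : ∀ (j : Fin 3) (ε : Bool),
      Complex.normSq (∑ i : Fin 6, Fin.append zu zd i * (starRingEnd ℂ) (FTcol a b j ε i)) = 6) :
    (∀ j : Fin 3,
      Complex.normSq (∑ i : Fin 3, zd i * (starRingEnd ℂ) (fvec j i)) =
        6 - Complex.normSq (∑ i : Fin 3, zu i * (starRingEnd ℂ) (fvec j i))) ∧
    Kfun a b zu zd =
      ((((∑ j : Fin 3,
          (Complex.normSq (∑ i : Fin 3, zu i * (starRingEnd ℂ) (fvec j i))) ^ 2) - 54) / 486
        : ℝ) : ℂ) := by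
  have hpair (j : Fin 3) := normSq_and_sq_mul_conj_of_unbiased_pair (norm_cpar ha hb j)
    (by simpa [inner_FTcol] using hunb j true)
    (by simpa [inner_FTcol, sub_eq_add_neg] using hunb j false)
  have hparseval : ∑ j : Fin 3, normSq (innerFvec zu j) = 9 := by
    rw [sum_normSq_innerFvec]
    simp only [normSq_eq_norm_sq, hzu, one_pow, Fin.sum_univ_three]
    norm_num
  refine ⟨fun j => (hpair j).1, ?_⟩
  rw [Kfun_eq_sum]
  simp only [fun j => (hpair j).2]
  have hsum : ∑ j : Fin 3, (normSq (innerFvec zu j) ^ 2 - 6 * normSq (innerFvec zu j)) =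
      ∑ j : Fin 3, normSq (innerFvec zu j) ^ 2 - 54 := by
    rw [Finset.sum_sub_distrib, ← Finset.mul_sum, hparseval]; ring
  rw [← ofReal_sum, hsum]
  push_cast [innerFvec]
  ring

/-- If `z = (z↑,z↓) ∈ 𝕋⁶` is unbiased to all six columns of `F^T(a,b)`, then
`|⟨z↓,f_j⟩|² = 6 - s_j` with `s_j = |⟨z↑,f_j⟩|²`, and
`K(z) = (s₀²+s₁²+s₂²-54)/486`; in particular `K(z)` is real. -/
theorem Kfun_eq_of_unbiased (a b : ℂ) (ha : ‖a‖ = 1) (hb : ‖b‖ = 1)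
    (zu zd : Fin 3 → ℂ)
    (hzu : ∀ i : Fin 3, ‖zu i‖ = 1) (hzd : ∀ i : Fin 3, ‖zd i‖ = 1)
    (hunb : ∀ (j : Fin 3) (ε : Bool),
      Complex.normSq (∑ i : Fin 6, Fin.append zu zd i * (starRingEnd ℂ) (FTcol a b j ε i)) = 6) :
    (∀ j : Fin 3,
      Complex.normSq (∑ i : Fin 3, zd i * (starRingEnd ℂ) (fvec j i)) =
        6 - Complex.normSq (∑ i : Fin 3, zu i * (starRingEnd ℂ) (fvec j i))) ∧
    Kfun a b zu zd =
      ((((∑ j : Fin 3,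
          (Complex.normSq (∑ i : Fin 3, zu i * (starRingEnd ℂ) (fvec j i))) ^ 2) - 54) / 486
        : ℝ) : ℂ) :=
  Kfun_eq_of_unbiased_general a b ha hb zu zd hzu hunb
end

section
/- A complex Hadamard matrix H of order n can be extended to a full system of n mutually unbiased Hadamard matrices if and only if its entrywise conjugate H̄ can, if and only if its transpose H^T can, if and only if its adjoint H* can. -/
open Finset

/-- `H` is a complex Hadamard matrix of order `n`. -/
def IsCHM (n : ℕ) (H : Matrix (Fin n) (Fin n) ℂ) : Prop :=
  (∀ j k : Fin n, ‖H j k‖ = 1) ∧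
  ∀ k k' : Fin n, k ≠ k' → (∑ j : Fin n, H j k * (starRingEnd ℂ) (H j k')) = 0

/-- Two matrices are unbiased: all cross inner products of columns have modulus `√n`. -/
def UnbiasedM (n : ℕ) (H₁ H₂ : Matrix (Fin n) (Fin n) ℂ) : Prop :=
  ∀ k k' : Fin n,
    ‖∑ j : Fin n, H₁ j k * (starRingEnd ℂ) (H₂ j k')‖ = Real.sqrt n

/-- `H` extends to a full system of `n` mutually unbiased Hadamard matrices. -/
def ExtendsToFullMUH (n : ℕ) (H : Matrix (Fin n) (Fin n) ℂ) : Prop :=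
  ∃ M : Fin n → Matrix (Fin n) (Fin n) ℂ,
    (∃ i : Fin n, M i = H) ∧ (∀ i : Fin n, IsCHM n (M i)) ∧
    ∀ i i' : Fin n, i ≠ i' → UnbiasedM n (M i) (M i')

/-! Conjugating every member of a full system preserves all its defining relations. For the
adjoint, `U = H* / √n` is unitary, so left multiplication by `U` preserves all the Gram matrices
`B* A` of a system containing `H`; it sends `H` to `√n • 1` and every other member `A` to a
Hadamard matrix, since the entries of `H* A` have modulus `√n` by unbiasedness. Since `√n • 1` is
unbiased to every Hadamard matrix, putting `H* = U (√n • 1)` in place of `U H = √n • 1` gives a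
full system containing `H*`. The transpose is the adjoint of the conjugate. -/

open Matrix ComplexConjugate

theorem Matrix.conjTranspose_mul_mul_of_mem_unitaryGroup {m p α : Type*} [Fintype m]
    [DecidableEq m] [CommRing α] [StarRing α] {U : Matrix m m α} (hU : U ∈ unitaryGroup m α)
    (A B : Matrix m p α) : (U * B)ᴴ * (U * A) = Bᴴ * A := by
  rw [conjTranspose_mul, Matrix.mul_assoc, ← Matrix.mul_assoc Uᴴ, ← star_eq_conjTranspose,
    mem_unitaryGroup_iff'.1 hU, Matrix.one_mul]

theorem Complex.ofReal_sqrt_natCast_ne_zero {n : ℕ} (hn : n ≠ 0) : (√n : ℂ) ≠ 0 := by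
  exact_mod_cast Real.sqrt_ne_zero'.2 (by positivity)

variable {n : ℕ} {A B H : Matrix (Fin n) (Fin n) ℂ}

theorem sum_mul_conj_eq_conjTranspose_mul_apply (A B : Matrix (Fin n) (Fin n) ℂ) (k k' : Fin n) :
    ∑ j, A j k * conj (B j k') = (Bᴴ * A) k' k := by
  simp [mul_apply, mul_comm]

theorem isCHM_iff : IsCHM n H ↔ (∀ j k, ‖H j k‖ = 1) ∧ Hᴴ * H = (n : ℂ) • 1 := by
  simp only [IsCHM, sum_mul_conj_eq_conjTranspose_mul_apply]
  refine and_congr_right fun hnorm => ⟨fun horth => ?_, fun hgram k k' hkk' => ?_⟩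
  · ext k' k
    rcases eq_or_ne k' k with rfl | hkk'
    · have hdiag : ∀ j, H j k' * conj (H j k') = 1 := fun j => by
        rw [RCLike.mul_conj, hnorm]; simp
      simp [← sum_mul_conj_eq_conjTranspose_mul_apply, hdiag]
    · simp [horth k k' hkk'.symm, hkk']
  · simp [hgram, hkk'.symm]

theorem unbiasedM_iff : UnbiasedM n A B ↔ ∀ k k', ‖(Bᴴ * A) k k'‖ = √n := by
  simp only [UnbiasedM, sum_mul_conj_eq_conjTranspose_mul_apply]
  exact forall_comm

theorem UnbiasedM.symm (h : UnbiasedM n A B) : UnbiasedM n B A := by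
  rw [unbiasedM_iff] at h ⊢
  intro k k'
  rw [← conjTranspose_conjTranspose B, ← conjTranspose_mul, conjTranspose_apply, norm_star, h]

theorem IsCHM.mul_conjTranspose_self (hH : IsCHM n H) : H * Hᴴ = (n : ℂ) • 1 := by
  rcases eq_or_ne n 0 with rfl | hn
  · exact Subsingleton.elim _ _
  have hinv : ((n : ℂ)⁻¹ • Hᴴ) * H = 1 := by
    rw [Matrix.smul_mul, (isCHM_iff.1 hH).2, smul_smul, inv_mul_cancel₀ (by exact_mod_cast hn),
      one_smul]
  rw [← smul_inv_smul₀ (by exact_mod_cast hn : (n : ℂ) ≠ 0) (H * Hᴴ), ← Matrix.mul_smul,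
    mul_eq_one_comm.1 hinv]

theorem IsCHM.conjTranspose (hH : IsCHM n H) : IsCHM n Hᴴ :=
  isCHM_iff.2 ⟨fun j k => by rw [conjTranspose_apply, norm_star, (isCHM_iff.1 hH).1],
    by rw [conjTranspose_conjTranspose, hH.mul_conjTranspose_self]⟩

theorem sum_map_conj_mul_conj (A B : Matrix (Fin n) (Fin n) ℂ) (k k' : Fin n) :
    ∑ j, A.map conj j k * conj (B.map conj j k') = conj (∑ j, A j k * conj (B j k')) := by
  simp [map_sum]

theorem IsCHM.map_conj (hH : IsCHM n H) : IsCHM n (H.map conj) :=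
  ⟨fun j k => by simpa using hH.1 j k, fun k k' hkk' => by
    rw [sum_map_conj_mul_conj, hH.2 k k' hkk', map_zero]⟩

theorem UnbiasedM.map_conj (h : UnbiasedM n A B) : UnbiasedM n (A.map conj) (B.map conj) :=
  fun k k' => by rw [sum_map_conj_mul_conj, Complex.norm_conj, h k k']

theorem ExtendsToFullMUH.map_conj (h : ExtendsToFullMUH n H) : ExtendsToFullMUH n (H.map conj) :=
  let ⟨M, ⟨i₀, hi₀⟩, hM, hMM⟩ := h
  ⟨fun i => (M i).map conj, ⟨i₀, congrArg (Matrix.map · conj) hi₀⟩, fun i => (hM i).map_conj,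
    fun i i' hii' => (hMM i i' hii').map_conj⟩

theorem extendsToFullMUH_map_conj_iff :
    ExtendsToFullMUH n (H.map conj) ↔ ExtendsToFullMUH n H :=
  ⟨fun h => by simpa [Matrix.map_map, Function.comp_def] using h.map_conj, .map_conj⟩

theorem IsCHM.inv_sqrt_smul_conjTranspose_mem_unitaryGroup (hH : IsCHM n H) :
    (√n : ℂ)⁻¹ • Hᴴ ∈ unitaryGroup (Fin n) ℂ := by
  rcases eq_or_ne n 0 with rfl | hn
  · exact mem_unitaryGroup_iff'.2 (Subsingleton.elim _ _)
  have hsqrt := Complex.ofReal_sqrt_natCast_ne_zero hn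
  have hsq : (√n : ℂ) * √n = n := by exact_mod_cast Real.mul_self_sqrt (Nat.cast_nonneg n)
  have hstar : star (√n : ℂ)⁻¹ = (√n : ℂ)⁻¹ := by simp
  rw [mem_unitaryGroup_iff', star_eq_conjTranspose, conjTranspose_smul, conjTranspose_conjTranspose,
    Matrix.smul_mul, Matrix.mul_smul, hH.mul_conjTranspose_self, smul_smul, smul_smul, hstar,
    ← hsq, ← mul_inv, inv_mul_cancel₀ (mul_ne_zero hsqrt hsqrt), one_smul]

theorem UnbiasedM.unitary_mul {U : Matrix (Fin n) (Fin n) ℂ} (hU : U ∈ unitaryGroup (Fin n) ℂ)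
    (h : UnbiasedM n A B) : UnbiasedM n (U * A) (U * B) := by
  rwa [unbiasedM_iff, conjTranspose_mul_mul_of_mem_unitaryGroup hU, ← unbiasedM_iff]

theorem IsCHM.unbiasedM_sqrt_smul_one (hA : IsCHM n A) : UnbiasedM n ((√n : ℂ) • 1) A :=
  unbiasedM_iff.2 fun k k' => by
    rw [Matrix.mul_smul, Matrix.mul_one, Matrix.smul_apply, conjTranspose_apply, smul_eq_mul,
      norm_mul, norm_star, hA.1, mul_one, Complex.norm_real,
      Real.norm_of_nonneg (Real.sqrt_nonneg _)]

theorem IsCHM.inv_sqrt_smul_conjTranspose_mul (hH : IsCHM n H) (hA : IsCHM n A)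
    (hAH : UnbiasedM n A H) : IsCHM n ((√n : ℂ)⁻¹ • Hᴴ * A) := by
  refine isCHM_iff.2 ⟨fun j k => ?_, ?_⟩
  · rw [Matrix.smul_mul, Matrix.smul_apply, smul_eq_mul, norm_mul, norm_inv, unbiasedM_iff.1 hAH,
      Complex.norm_real, Real.norm_of_nonneg (Real.sqrt_nonneg _), inv_mul_cancel₀]
    exact Real.sqrt_ne_zero'.2 (by exact_mod_cast j.pos)
  · rw [conjTranspose_mul_mul_of_mem_unitaryGroup hH.inv_sqrt_smul_conjTranspose_mem_unitaryGroup,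
      (isCHM_iff.1 hA).2]

theorem ExtendsToFullMUH.conjTranspose (h : ExtendsToFullMUH n H) : ExtendsToFullMUH n Hᴴ := by
  obtain ⟨M, ⟨i₀, rfl⟩, hM, hMM⟩ := h
  set U := (√n : ℂ)⁻¹ • (M i₀)ᴴ
  have hU : U ∈ unitaryGroup (Fin n) ℂ := (hM i₀).inv_sqrt_smul_conjTranspose_mem_unitaryGroup
  have hUH : U * ((√n : ℂ) • 1) = (M i₀)ᴴ := by
    rw [Matrix.mul_smul, Matrix.mul_one, smul_smul,
      mul_inv_cancel₀ (Complex.ofReal_sqrt_natCast_ne_zero i₀.pos.ne'), one_smul]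
  have hunb : ∀ i, UnbiasedM n (M i₀)ᴴ (U * M i) := fun i => by
    rw [← hUH]; exact (hM i).unbiasedM_sqrt_smul_one.unitary_mul hU
  refine ⟨Function.update (fun i => U * M i) i₀ (M i₀)ᴴ, ⟨i₀, by simp⟩, fun i => ?_,
    fun i i' hii' => ?_⟩
  · rcases eq_or_ne i i₀ with rfl | hi
    · simpa using (hM i).conjTranspose
    · rw [Function.update_of_ne hi]
      exact (hM i₀).inv_sqrt_smul_conjTranspose_mul (hM i) (hMM i i₀ hi)
  · rcases eq_or_ne i i₀ with rfl | hi
    · simpa [hii'.symm] using hunb i'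
    rcases eq_or_ne i' i₀ with rfl | hi'
    · simpa [hi] using (hunb i).symm
    · simpa [hi, hi'] using (hMM i i' hii').unitary_mul hU

theorem extendsToFullMUH_conjTranspose_iff : ExtendsToFullMUH n Hᴴ ↔ ExtendsToFullMUH n H :=
  ⟨fun h => by simpa using h.conjTranspose, .conjTranspose⟩

theorem extendsToFullMUH_conj_transpose_adjoint_general (n : ℕ)
    (H : Matrix (Fin n) (Fin n) ℂ) :
    (ExtendsToFullMUH n H ↔ ExtendsToFullMUH n (H.map (starRingEnd ℂ))) ∧
    (ExtendsToFullMUH n H ↔ ExtendsToFullMUH n H.transpose) ∧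
    (ExtendsToFullMUH n H ↔ ExtendsToFullMUH n H.conjTranspose) := by
  have htranspose : H.transpose = (H.map conj)ᴴ := by ext; simp
  refine ⟨extendsToFullMUH_map_conj_iff.symm, ?_, extendsToFullMUH_conjTranspose_iff.symm⟩
  rw [htranspose, extendsToFullMUH_conjTranspose_iff, extendsToFullMUH_map_conj_iff]

/-- A complex Hadamard matrix extends to a full MUH system iff its conjugate does,
iff its transpose does, iff its adjoint does. -/
theorem extendsToFullMUH_conj_transpose_adjoint (n : ℕ)
    (H : Matrix (Fin n) (Fin n) ℂ) (hH : IsCHM n H) :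
    (ExtendsToFullMUH n H ↔ ExtendsToFullMUH n (H.map (starRingEnd ℂ))) ∧
    (ExtendsToFullMUH n H ↔ ExtendsToFullMUH n H.transpose) ∧
    (ExtendsToFullMUH n H ↔ ExtendsToFullMUH n H.conjTranspose) :=
  extendsToFullMUH_conj_transpose_adjoint_general n H
end

section
/- Let m, k be positive integers with k < m, G a finite abelian group, A ⊆ G symmetric with 0 ∈ A, and h a Delsarte witness function for A with h(0)/ĥ(1) = m (h ≤ 0 off A, ĥ ≥ 0). Let b₁,…,b_k ∈ G with b_i − b_j ∉ A for i ≠ j, and let D = {d ∈ G : d ∉ {b₁,…,b_k}, d − b_j ∉ A for all j}. Suppose K : G → ℂ satisfies K̂(1) = 0, K̂(γ) = 0 whenever ĥ(γ) = 0, ∑_{j=1}^k K(b_j) = 1, and either Re K(x) > −1/(m−k) for all x ∈ D, or Re K(x) < −1/(m−k) for all x ∈ D. Then every B ⊆ G containing b₁,…,b_k with B − B ⊆ (G\A) ∪ {0} satisfies |B| ≤ m − 1. -/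
open Finset

private lemma inv_pt {G : Type*} [AddCommGroup G] [Fintype G] [DecidableEq G]
    (f : G → ℂ) (y : G) :
    ∑ γ : AddChar G ℂ, ((∑ x : G, f x * γ x) / (Fintype.card G : ℂ)) * γ y = f (-y) := by
  have hc : (Fintype.card G : ℂ) ≠ 0 := Nat.cast_ne_zero.2 Fintype.card_ne_zero
  simp_rw [div_mul_eq_mul_div, ← Finset.sum_div]
  rw [div_eq_iff hc]
  calc ∑ γ : AddChar G ℂ, (∑ x : G, f x * γ x) * γ y
      = ∑ x : G, f x * ∑ γ : AddChar G ℂ, γ (x + y) := by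
        simp_rw [Finset.sum_mul]
        rw [Finset.sum_comm]
        refine Finset.sum_congr rfl fun x _ => ?_
        rw [Finset.mul_sum]
        refine Finset.sum_congr rfl fun γ _ => ?_
        rw [AddChar.map_add_eq_mul, mul_assoc]
    _ = f (-y) * (Fintype.card G : ℂ) := by
        simp_rw [AddChar.sum_apply_eq_ite, mul_ite, mul_zero, add_eq_zero_iff_eq_neg]
        rw [Finset.sum_ite_eq' Finset.univ (-y) (fun x => f x * (Fintype.card G : ℂ))]
        simp

private lemma sum_via_fourier {G : Type*} [AddCommGroup G] [Fintype G] [DecidableEq G]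
    (f : G → ℂ) (B : Finset G) :
    ∑ γ : AddChar G ℂ, ((∑ x : G, f x * γ x) / (Fintype.card G : ℂ)) *
      (starRingEnd ℂ) (∑ w ∈ B, γ w) = ∑ w ∈ B, f w := by
  have : ∀ γ : AddChar G ℂ, (starRingEnd ℂ) (∑ w ∈ B, γ w) = ∑ w ∈ B, γ (-w) := by
    intro γ; rw [map_sum]; exact Finset.sum_congr rfl fun w _ => (AddChar.map_neg_eq_conj γ w).symm
  simp_rw [this, Finset.mul_sum]
  rw [Finset.sum_comm]
  refine Finset.sum_congr rfl fun w _ => ?_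
  simpa using inv_pt f (-w)

private lemma spectral_id {G : Type*} [AddCommGroup G] [Fintype G] [DecidableEq G]
    (h : G → ℝ) (B : Finset G) :
    ∑ γ : AddChar G ℂ, ((∑ x : G, (h x : ℂ) * γ x) / (Fintype.card G : ℂ)) *
      ((∑ v ∈ B, γ v) * (starRingEnd ℂ) (∑ w ∈ B, γ w))
      = ∑ v ∈ B, ∑ w ∈ B, ((h (v - w) : ℝ) : ℂ) := by
  have key : ∀ v : G, ∑ γ : AddChar G ℂ,
      (((∑ x : G, (h x : ℂ) * γ x) / (Fintype.card G : ℂ)) * γ v) *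
        (starRingEnd ℂ) (∑ w ∈ B, γ w) = ∑ w ∈ B, ((h (w - v) : ℝ) : ℂ) := by
    intro v
    have h1 : ∀ γ : AddChar G ℂ,
        ((∑ x : G, (h x : ℂ) * γ x) / (Fintype.card G : ℂ)) * γ v
          = (∑ u : G, ((h (u - v) : ℝ) : ℂ) * γ u) / (Fintype.card G : ℂ) := by
      intro γ
      rw [div_mul_eq_mul_div, Finset.sum_mul]
      congr 1
      refine Fintype.sum_equiv (Equiv.addRight v) _ _ fun x => ?_
      simp [AddChar.map_add_eq_mul, mul_assoc]
    simp_rw [h1]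
    exact sum_via_fourier (fun u => ((h (u - v) : ℝ) : ℂ)) B
  calc ∑ γ : AddChar G ℂ, ((∑ x : G, (h x : ℂ) * γ x) / (Fintype.card G : ℂ)) *
        ((∑ v ∈ B, γ v) * (starRingEnd ℂ) (∑ w ∈ B, γ w))
      = ∑ v ∈ B, ∑ γ : AddChar G ℂ,
          (((∑ x : G, (h x : ℂ) * γ x) / (Fintype.card G : ℂ)) * γ v) *
            (starRingEnd ℂ) (∑ w ∈ B, γ w) := by
        rw [Finset.sum_comm]
        refine Finset.sum_congr rfl fun γ _ => ?_
        simp_rw [Finset.sum_mul, Finset.mul_sum]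
        refine Finset.sum_congr rfl fun v _ => ?_
        ring
    _ = ∑ v ∈ B, ∑ w ∈ B, ((h (w - v) : ℝ) : ℂ) := Finset.sum_congr rfl fun v _ => key v
    _ = ∑ v ∈ B, ∑ w ∈ B, ((h (v - w) : ℝ) : ℂ) := Finset.sum_comm
/-- Corollary 1: improved Delsarte bound ruling out extremal configurations
containing prescribed points `b₁,…,b_k`. -/
theorem improved_delsarte_corollary {G : Type*} [AddCommGroup G] [Fintype G] [DecidableEq G]
    (m k : ℕ) (hk : 0 < k) (hkm : k < m)
    (A : Finset G) (hA0 : (0 : G) ∈ A) (hAsymm : ∀ x ∈ A, -x ∈ A)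
    (h : G → ℝ) (K : G → ℂ)
    (H : AddChar G ℂ → ℂ) (Kf : AddChar G ℂ → ℂ)
    (hH : ∀ γ : AddChar G ℂ, H γ = (∑ x : G, (h x : ℂ) * γ x) / (Fintype.card G : ℂ))
    (hKf : ∀ γ : AddChar G ℂ, Kf γ = (∑ x : G, K x * γ x) / (Fintype.card G : ℂ))
    (hneg : ∀ x : G, x ∉ A → h x ≤ 0)
    (hft : ∀ γ : AddChar G ℂ, 0 ≤ (H γ).re ∧ (H γ).im = 0)
    (hm : h 0 / (H (1 : AddChar G ℂ)).re = m)
    (b : Fin k → G) (hb : ∀ i j : Fin k, i ≠ j → b i - b j ∉ A)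
    (D : Set G)
    (hD : D = {d : G | (∀ j : Fin k, d ≠ b j) ∧ ∀ j : Fin k, d - b j ∉ A})
    (hK1 : Kf (1 : AddChar G ℂ) = 0)
    (hKnull : ∀ γ : AddChar G ℂ, H γ = 0 → Kf γ = 0)
    (hKsum : ∑ j : Fin k, K (b j) = 1)
    (hKside : (∀ x ∈ D, -1 / ((m : ℝ) - k) < (K x).re) ∨
      (∀ x ∈ D, (K x).re < -1 / ((m : ℝ) - k)))
    (B : Finset G) (hbB : ∀ j : Fin k, b j ∈ B)
    (hB : ∀ v ∈ B, ∀ w ∈ B, v - w ∉ A ∨ v - w = 0) :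
    B.card ≤ m - 1 := by
  by_contra hcon
  have hnm : m ≤ B.card := by omega
  set n := B.card with hn
  -- H γ is real
  have hHreal : ∀ γ : AddChar G ℂ, H γ = ((H γ).re : ℂ) := fun γ =>
    Complex.ext (by simp) (by simp [(hft γ).2])
  set c1 : ℝ := (H (1 : AddChar G ℂ)).re with hc1def
  have hmpos : (0 : ℝ) < m := by exact_mod_cast hk.trans hkm
  have hc1 : 0 < c1 := by
    rcases eq_or_lt_of_le (hft (1 : AddChar G ℂ)).1 with h0 | h0
    · exfalso
      rw [← hc1def] at h0
      rw [← h0, div_zero] at hm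
      exact absurd hm.symm (by positivity)
    · exact h0
  have hh0 : h 0 = m * c1 := by
    rw [div_eq_iff hc1.ne'] at hm; linarith [hm]
  -- the exponential sum
  set S : AddChar G ℂ → ℂ := fun γ => ∑ v ∈ B, γ v with hSdef
  set r : AddChar G ℂ → ℝ := fun γ => (H γ).re * Complex.normSq (S γ) with hrdef
  have hrnn : ∀ γ : AddChar G ℂ, 0 ≤ r γ := fun γ =>
    mul_nonneg (hft γ).1 (Complex.normSq_nonneg _)
  -- spectral identity, real form
  have hid : ∑ γ : AddChar G ℂ, r γ = ∑ v ∈ B, ∑ w ∈ B, h (v - w) := by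
    have hC : ((∑ γ : AddChar G ℂ, r γ : ℝ) : ℂ)
        = ((∑ v ∈ B, ∑ w ∈ B, h (v - w) : ℝ) : ℂ) := by
      push_cast
      calc (∑ γ : AddChar G ℂ, ((r γ : ℝ) : ℂ))
          = ∑ γ : AddChar G ℂ, H γ * (S γ * (starRingEnd ℂ) (S γ)) := by
            refine Finset.sum_congr rfl fun γ _ => ?_
            rw [Complex.mul_conj, hrdef]
            rw [hHreal γ]
            push_cast
            ring
        _ = ∑ v ∈ B, ∑ w ∈ B, ((h (v - w) : ℝ) : ℂ) := by
            simp_rw [hH]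
            exact spectral_id h B
    exact_mod_cast hC
  -- upper bound on the double sum
  have hup : ∑ v ∈ B, ∑ w ∈ B, h (v - w) ≤ (n : ℝ) * h 0 := by
    calc ∑ v ∈ B, ∑ w ∈ B, h (v - w) ≤ ∑ _v ∈ B, h 0 := by
          refine Finset.sum_le_sum fun v hv => ?_
          rw [← Finset.add_sum_erase B _ hv, sub_self]
          have : ∑ w ∈ B.erase v, h (v - w) ≤ 0 := by
            refine Finset.sum_nonpos fun w hw => ?_
            have hwB := Finset.mem_of_mem_erase hw
            rcases hB v hv w hwB with hA' | h0'
            · exact hneg _ hA'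
            · exact absurd (sub_eq_zero.mp h0').symm (Finset.ne_of_mem_erase hw)
          linarith
      _ = (n : ℝ) * h 0 := by rw [Finset.sum_const, nsmul_eq_mul, hn]
  have hr1 : r 1 = c1 * (n : ℝ) ^ 2 := by
    have hS1 : S (1 : AddChar G ℂ) = (n : ℂ) := by
      rw [hSdef]; simp [hn]
    rw [hrdef]
    simp only [hS1, ← hc1def, Complex.normSq_natCast]
    ring
  have hlow : r 1 ≤ ∑ γ : AddChar G ℂ, r γ :=
    Finset.single_le_sum (fun γ _ => hrnn γ) (Finset.mem_univ 1)
  have hNM : (m : ℝ) ≤ (n : ℝ) := by exact_mod_cast hnm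
  have hchain : ∑ γ : AddChar G ℂ, r γ ≤ c1 * (n : ℝ) ^ 2 := by
    calc ∑ γ : AddChar G ℂ, r γ = ∑ v ∈ B, ∑ w ∈ B, h (v - w) := hid
      _ ≤ (n : ℝ) * h 0 := hup
      _ = (n : ℝ) * ((m : ℝ) * c1) := by rw [hh0]
      _ ≤ c1 * (n : ℝ) ^ 2 := by
          have h8 := mul_le_mul_of_nonneg_left hNM (mul_nonneg hc1.le (Nat.cast_nonneg n))
          nlinarith [h8]
  have hEq : ∑ γ : AddChar G ℂ, r γ = r 1 := le_antisymm (hchain.trans_eq hr1.symm) hlow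
  have hnm' : n ≤ m := by
    have hNn : (0 : ℝ) < (n : ℝ) := lt_of_lt_of_le hmpos hNM
    have key : c1 * (n : ℝ) ^ 2 ≤ (n : ℝ) * ((m : ℝ) * c1) := by
      calc c1 * (n : ℝ) ^ 2 = r 1 := hr1.symm
        _ ≤ ∑ γ : AddChar G ℂ, r γ := hlow
        _ = ∑ v ∈ B, ∑ w ∈ B, h (v - w) := hid
        _ ≤ (n : ℝ) * h 0 := hup
        _ = (n : ℝ) * ((m : ℝ) * c1) := by rw [hh0]
    have hpos : 0 < c1 * (n : ℝ) := mul_pos hc1 hNn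
    have h9 : c1 * (n : ℝ) * (n : ℝ) ≤ c1 * (n : ℝ) * (m : ℝ) := by nlinarith [key]
    have h10 := le_of_mul_le_mul_left h9 hpos
    exact_mod_cast h10
  have hneq : n = m := le_antisymm hnm' hnm
  have herase : ∑ γ ∈ Finset.univ.erase (1 : AddChar G ℂ), r γ = 0 := by
    have h2 := Finset.add_sum_erase Finset.univ r (Finset.mem_univ (1 : AddChar G ℂ))
    linarith [hEq, h2]
  have heach : ∀ γ : AddChar G ℂ, γ ≠ 1 → r γ = 0 := by
    intro γ hγ
    exact (Finset.sum_eq_zero_iff_of_nonneg (fun γ _ => hrnn γ)).mp herase γ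
      (Finset.mem_erase.mpr ⟨hγ, Finset.mem_univ γ⟩)
  -- sum of K over B vanishes
  have hKB : ∑ w ∈ B, K w = 0 := by
    rw [← sum_via_fourier K B]
    refine Finset.sum_eq_zero fun γ _ => ?_
    rw [← hKf γ]
    by_cases h1γ : γ = 1
    · rw [h1γ, hK1, zero_mul]
    by_cases hHγ : H γ = 0
    · rw [hKnull γ hHγ, zero_mul]
    · have hre : (H γ).re ≠ 0 := fun hc => hHγ (by rw [hHreal γ, hc]; simp)
      have hns : Complex.normSq (S γ) = 0 := by
        have h3 := heach γ h1γ
        rw [hrdef] at h3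
        rcases mul_eq_zero.mp h3 with h4 | h4
        · exact absurd h4 hre
        · exact h4
      have hS0 : S γ = 0 := Complex.normSq_eq_zero.mp hns
      rw [show (∑ w ∈ B, γ w) = S γ from rfl, hS0, map_zero, mul_zero]
  have hKBre : ∑ w ∈ B, (K w).re = 0 := by
    have := congrArg Complex.re hKB
    rwa [Complex.re_sum] at this
  -- the prescribed points
  have hbinj : Function.Injective b := by
    intro i j hij
    by_contra hne
    exact hb i j hne (by rw [hij, sub_self]; exact hA0)
  set img := Finset.image b Finset.univ with himgdef
  have himgsub : img ⊆ B := by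
    intro x hx
    rw [himgdef, Finset.mem_image] at hx
    obtain ⟨j, _, rfl⟩ := hx
    exact hbB j
  have hcardimg : img.card = k := by
    rw [himgdef, Finset.card_image_of_injective _ hbinj, Finset.card_univ, Fintype.card_fin]
  have hsumimg : ∑ x ∈ img, (K x).re = 1 := by
    rw [himgdef, Finset.sum_image (fun i _ j _ hij => hbinj hij)]
    have h5 : (∑ j : Fin k, K (b j)).re = (1 : ℂ).re := congrArg Complex.re hKsum
    rw [Complex.re_sum] at h5
    simpa using h5
  set B' := B \ img with hB'def
  have hcardB' : B'.card = m - k := by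
    rw [hB'def, Finset.card_sdiff_of_subset himgsub, hcardimg, ← hn, hneq]
  have hB'D : ∀ x ∈ B', x ∈ D := by
    intro x hx
    rw [hB'def, Finset.mem_sdiff] at hx
    obtain ⟨hxB, hximg⟩ := hx
    rw [hD]
    refine ⟨fun j hxj => hximg ?_, fun j => ?_⟩
    · rw [himgdef, Finset.mem_image]
      exact ⟨j, Finset.mem_univ j, hxj.symm⟩
    · rcases hB x hxB (b j) (hbB j) with hA' | h0'
      · exact hA'
      · exfalso
        apply hximg
        rw [himgdef, Finset.mem_image]
        exact ⟨j, Finset.mem_univ j, (sub_eq_zero.mp h0').symm⟩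
  have hsumB' : ∑ x ∈ B', (K x).re = -1 := by
    have h6 : ∑ x ∈ B', (K x).re + ∑ x ∈ img, (K x).re = ∑ x ∈ B, (K x).re :=
      Finset.sum_sdiff himgsub
    rw [hsumimg, hKBre] at h6
    linarith
  have hmk : (k : ℝ) < (m : ℝ) := by exact_mod_cast hkm
  have hcastmk : ((B'.card : ℝ)) = (m : ℝ) - k := by
    rw [hcardB']
    push_cast [hkm.le]
    ring
  have hB'ne : B'.Nonempty := Finset.card_pos.mp (by rw [hcardB']; omega)
  have hne0 : (m : ℝ) - k ≠ 0 := by linarith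
  have hfld : ((m : ℝ) - k) * (-1 / ((m : ℝ) - k)) = -1 := by
    rw [mul_comm]
    exact div_mul_cancel₀ (-1) hne0
  rcases hKside with hside | hside
  · have h7 : ∑ _x ∈ B', (-1 / ((m : ℝ) - k)) < ∑ x ∈ B', (K x).re :=
      Finset.sum_lt_sum_of_nonempty hB'ne fun x hx => hside x (hB'D x hx)
    rw [Finset.sum_const, nsmul_eq_mul, hcastmk, hfld, hsumB'] at h7
    exact lt_irrefl _ h7
  · have h7 : ∑ x ∈ B', (K x).re < ∑ _x ∈ B', (-1 / ((m : ℝ) - k)) :=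
      Finset.sum_lt_sum_of_nonempty hB'ne fun x hx => hside x (hB'D x hx)
    rw [Finset.sum_const, nsmul_eq_mul, hcastmk, hfld, hsumB'] at h7
    exact lt_irrefl _ h7
end
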